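/- arXiv:math/0604580 — 6 statements merged into one kernel-verified Lean document; each statement's English description precedes it below -/
import Mathlib

section
/- Let φ be an automorphism of the once-punctured torus whose induced map on H_1 is given by a matrix A ∈ SL(2,ℤ). If A can be written as a product X^{a_1} Y^{-b_1} ⋯ X^{a_n} Y^{-b_n} with all a_i, b_j ≥ 0 and some a_i ≠ 0 and some b_j ≠ 0 (where X = [[1,1],[0,1]], Y = [[1,0],[-1,1]]), then trace(A) > 2. -/
/-!
`X^a = !![1, a; 0, 1]` and `Y^{-b} = !![1, 0; b, 1]` have nonnegative entries when `a, b ≥ 0`, so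
the product of the blocks `X^{a_i} Y^{-b_i}` dominates `!![1, Σ a_i; Σ b_i, 1]` entrywise. If both
sums are positive, `det A = 1` gives `A₀₀ A₁₁ = 1 + A₀₁ A₁₀ > 1` with `A₀₀, A₁₁ ≥ 1`, whence
`A₀₀ + A₁₁ > 2`.
-/

open Matrix

def Xm : Matrix.SpecialLinearGroup (Fin 2) ℤ :=
  ⟨!![1, 1; 0, 1], by norm_num [Matrix.det_fin_two_of]⟩

def Ym : Matrix.SpecialLinearGroup (Fin 2) ℤ :=
  ⟨!![1, 0; -1, 1], by norm_num [Matrix.det_fin_two_of]⟩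

namespace Matrix

section Preorder

variable {R : Type*} [Preorder R] {m n : Type*}

def EntrywiseLE (A B : Matrix m n R) : Prop :=
  ∀ i j, A i j ≤ B i j

theorem EntrywiseLE.trans {A B C : Matrix m n R} (hAB : EntrywiseLE A B)
    (hBC : EntrywiseLE B C) : EntrywiseLE A C :=
  fun i j => (hAB i j).trans (hBC i j)

end Preorder

section OrderedSemiring

variable {R : Type*} [Semiring R] [PartialOrder R] [IsOrderedRing R]

theorem EntrywiseLE.mul {l m n : Type*} [Fintype m] {A B : Matrix l m R} {C D : Matrix m n R}
    (hA : EntrywiseLE 0 A) (hC : EntrywiseLE 0 C) (hAB : EntrywiseLE A B)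
    (hCD : EntrywiseLE C D) : EntrywiseLE (A * C) (B * D) :=
  fun i k => Finset.sum_le_sum fun j _ =>
    mul_le_mul (hAB i j) (hCD j k) (hC j k) ((hA i j).trans (hAB i j))

theorem entrywiseLE_zero_fin_two {c d : R} (hc : 0 ≤ c) (hd : 0 ≤ d) :
    EntrywiseLE 0 !![1, c; d, 1] := by
  intro i j
  fin_cases i <;> fin_cases j <;> simp [hc, hd]

theorem entrywiseLE_add_mul_fin_two {c d c' d' : R} (hc : 0 ≤ c) (hd : 0 ≤ d) (hc' : 0 ≤ c')
    (hd' : 0 ≤ d') :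
    EntrywiseLE !![1, c + c'; d + d', 1] (!![1, c; d, 1] * !![1, c'; d', 1]) := by
  intro i j
  fin_cases i <;> fin_cases j <;> simp [add_comm, le_add_of_nonneg_left, mul_nonneg, *]

theorem EntrywiseLE.mul_fin_two {c d c' d' : R} (hc : 0 ≤ c) (hd : 0 ≤ d) (hc' : 0 ≤ c')
    (hd' : 0 ≤ d') {M N : Matrix (Fin 2) (Fin 2) R}
    (hM : EntrywiseLE !![1, c; d, 1] M) (hN : EntrywiseLE !![1, c'; d', 1] N) :
    EntrywiseLE !![1, c + c'; d + d', 1] (M * N) :=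
  (entrywiseLE_add_mul_fin_two hc hd hc' hd').trans <|
    (entrywiseLE_zero_fin_two hc hd).mul (entrywiseLE_zero_fin_two hc' hd') hM hN

theorem entrywiseLE_list_prod_fin_two {k : ℕ} (M : Fin k → Matrix (Fin 2) (Fin 2) R)
    (c d : Fin k → R) (hc : ∀ i, 0 ≤ c i) (hd : ∀ i, 0 ≤ d i)
    (hM : ∀ i, EntrywiseLE !![1, c i; d i, 1] (M i)) :
    EntrywiseLE !![1, ∑ i, c i; ∑ i, d i, 1] (List.ofFn M).prod := by
  induction k with
  | zero =>
    intro i j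
    fin_cases i <;> fin_cases j <;> simp
  | succ k ih =>
    rw [List.ofFn_succ, List.prod_cons, Fin.sum_univ_succ, Fin.sum_univ_succ]
    exact (hM 0).mul_fin_two (hc 0) (hd 0) (Finset.sum_nonneg fun i _ => hc i.succ)
      (Finset.sum_nonneg fun i _ => hd i.succ)
      (ih _ _ _ (fun i => hc i.succ) (fun i => hd i.succ) fun i => hM i.succ)

end OrderedSemiring

theorem two_lt_trace_of_det_eq_one {R : Type*} [CommRing R] [LinearOrder R]
    [IsStrictOrderedRing R] {M : Matrix (Fin 2) (Fin 2) R} {c d : R} (hc : 0 < c) (hd : 0 < d)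
    (hdet : M.det = 1) (hM : EntrywiseLE !![1, c; d, 1] M) : 2 < M.trace := by
  have h00 : 1 ≤ M 0 0 := hM 0 0
  have h01 : c ≤ M 0 1 := hM 0 1
  have h10 : d ≤ M 1 0 := hM 1 0
  have h11 : 1 ≤ M 1 1 := hM 1 1
  rw [det_fin_two] at hdet
  rw [trace_fin_two]
  nlinarith [mul_le_mul h01 h10 hd.le (hc.le.trans h01)]

end Matrix

theorem coe_Ym_zpow (k : ℤ) : ((Ym ^ k : Matrix.SpecialLinearGroup (Fin 2) ℤ) :
    Matrix (Fin 2) (Fin 2) ℤ) = !![1, 0; -k, 1] := by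
  have hYinv : ((Ym⁻¹ : Matrix.SpecialLinearGroup (Fin 2) ℤ) : Matrix (Fin 2) (Fin 2) ℤ) =
      !![1, 0; 1, 1] := by
    rw [Matrix.SpecialLinearGroup.coe_inv]
    simp [Ym, adjugate_fin_two_of]
  induction k with
  | zero => simp [one_fin_two]
  | succ k ih =>
    simp_rw [_root_.zpow_add, zpow_one, Matrix.SpecialLinearGroup.coe_mul, ih, Ym, mul_fin_two]
    congrm !![?_, ?_; ?_, ?_] <;> push_cast <;> ring
  | pred k ih =>
    simp_rw [_root_.zpow_sub, zpow_one, Matrix.SpecialLinearGroup.coe_mul, ih, hYinv, mul_fin_two]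
    congrm !![?_, ?_; ?_, ?_] <;> push_cast <;> ring

theorem coe_Xm_zpow_mul_Ym_zpow_neg (a b : ℕ) :
    ((Xm ^ (a : ℤ) * Ym ^ (-(b : ℤ)) : Matrix.SpecialLinearGroup (Fin 2) ℤ) :
      Matrix (Fin 2) (Fin 2) ℤ) = !![1 + (a : ℤ) * b, (a : ℤ); (b : ℤ), 1] := by
  rw [Matrix.SpecialLinearGroup.coe_mul, coe_Ym_zpow, show Xm = ModularGroup.T from rfl,
    ModularGroup.coe_T_zpow, mul_fin_two]
  simp [add_comm]

theorem entrywiseLE_Xm_zpow_mul_Ym_zpow_neg (a b : ℕ) :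
    EntrywiseLE !![1, (a : ℤ); (b : ℤ), 1]
      (Xm ^ (a : ℤ) * Ym ^ (-(b : ℤ)) : Matrix.SpecialLinearGroup (Fin 2) ℤ) := by
  rw [coe_Xm_zpow_mul_Ym_zpow_neg]
  intro i j
  fin_cases i <;> fin_cases j <;> simp [mul_nonneg]

theorem sum_natCast_pos {ι : Type*} [Fintype ι] {a : ι → ℕ} (ha : ∃ i, a i ≠ 0) :
    0 < ∑ i, (a i : ℤ) :=
  Finset.sum_pos' (fun i _ => Int.natCast_nonneg _)
    (ha.imp fun i hi => ⟨Finset.mem_univ i, by omega⟩)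

/-- If `A = X^{a_1} Y^{-b_1} ⋯ X^{a_n} Y^{-b_n}` with all `a_i, b_j ≥ 0`,
some `a_i ≠ 0` and some `b_j ≠ 0`, then `trace A > 2`. -/
theorem trace_gt_two_of_typeI (n : ℕ) (a b : Fin n → ℕ)
    (ha : ∃ i, a i ≠ 0) (hb : ∃ j, b j ≠ 0)
    (A : Matrix.SpecialLinearGroup (Fin 2) ℤ)
    (hA : A = (List.ofFn fun i => Xm ^ (a i : ℤ) * Ym ^ (-(b i : ℤ))).prod) :
    2 < Matrix.trace (A : Matrix (Fin 2) (Fin 2) ℤ) := by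
  have hdom : EntrywiseLE !![1, ∑ i, (a i : ℤ); ∑ i, (b i : ℤ), 1] A := by
    rw [hA, ← Matrix.SpecialLinearGroup.coeMonoidHom_apply, map_list_prod, List.map_ofFn]
    exact entrywiseLE_list_prod_fin_two _ _ _ (fun i => Int.natCast_nonneg _)
      (fun i => Int.natCast_nonneg _) fun i => entrywiseLE_Xm_zpow_mul_Ym_zpow_neg (a i) (b i)
  exact two_lt_trace_of_det_eq_one (sum_natCast_pos ha) (sum_natCast_pos hb) A.det_coe hdom
end

section
/- For every matrix A ∈ SL(2,ℤ), there exist an integer m ≥ 1 and integers b_1, …, b_{2m} and a sign ε ∈ {1, -1} such that ε·A = (X Y^{b_1})(X Y^{b_2})⋯(X Y^{b_{2m}}), where X = [[1,1],[0,1]] and Y = [[1,0],[-1,1]]. -/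
open Matrix

def negI : Matrix.SpecialLinearGroup (Fin 2) ℤ :=
  ⟨!![-1, 0; 0, -1], by norm_num [Matrix.det_fin_two_of]⟩

/-! Products of an even number of factors `X Y^b` form a submonoid of `SL(2, ℤ)`. It contains
`S` and `T` and their inverses, for instance `S⁻¹ = (X Y)(X)` and `T = X (X Y³)³`, the latter
using the odd-length relation `(X Y³)³ = 1`; as `S` and `T` generate `SL(2, ℤ)`, the submonoid is
everything. Prepending `(X Y³)⁶ = 1` makes the word nonempty. -/

open MatrixGroups ModularGroup Matrix.SpecialLinearGroup

lemma Xm_eq_T : Xm = T := rfl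

lemma Ym_eq_S_mul_T_mul_S_inv : Ym = S * T * S⁻¹ := by decide

def xyPow (b : ℤ) : SL(2, ℤ) := Xm * Ym ^ b

lemma coe_xyPow (b : ℤ) : (xyPow b : Matrix (Fin 2) (Fin 2) ℤ) = !![1 - b, 1; -b, 1] := by
  simp [xyPow, Xm_eq_T, Ym_eq_S_mul_T_mul_S_inv, conj_zpow, coe_T_zpow, coe_inv,
    adjugate_fin_two, sub_eq_add_neg]

lemma xyPow_three_pow_three : xyPow 3 ^ 3 = 1 := by
  ext i j
  fin_cases i <;> fin_cases j <;> simp [pow_succ, coe_xyPow]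

def evenXYWords : Submonoid SL(2, ℤ) where
  carrier := {A | ∃ l : List ℤ, Even l.length ∧ (l.map xyPow).prod = A}
  one_mem' := ⟨[], by simp⟩
  mul_mem' := by
    rintro _ _ ⟨l₁, he₁, rfl⟩ ⟨l₂, he₂, rfl⟩
    exact ⟨l₁ ++ l₂, by simpa using he₁.add he₂, by simp⟩

lemma evenXYWords_eq_top : evenXYWords = ⊤ := by
  have hS : S ∈ evenXYWords := ⟨[2, 2, 1, 0], by decide, by
    ext i j; fin_cases i <;> fin_cases j <;> simp [coe_xyPow]⟩
  have hS_inv : S⁻¹ ∈ evenXYWords := ⟨[1, 0], by decide, by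
    ext i j; fin_cases i <;> fin_cases j <;> simp [coe_xyPow, coe_inv, adjugate_fin_two]⟩
  have hT : T ∈ evenXYWords := ⟨[0, 3, 3, 3], by decide, by
    ext i j; fin_cases i <;> fin_cases j <;> simp [coe_xyPow]⟩
  have hT_inv : T⁻¹ ∈ evenXYWords := ⟨[1, 1, 3, 2], by decide, by
    ext i j; fin_cases i <;> fin_cases j <;> simp [coe_xyPow]⟩
  rw [eq_top_iff, ← Subgroup.top_toSubmonoid, ← SpecialLinearGroup.SL2Z_generators,
    Subgroup.closure_toSubmonoid, Submonoid.closure_le]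
  simp only [Set.union_subset_iff, Set.inv_insert, Set.inv_singleton, Set.insert_subset_iff,
    Set.singleton_subset_iff]
  exact ⟨⟨hS, hT⟩, hS_inv, hT_inv⟩

/-- Every `A ∈ SL(2,ℤ)` can be written, up to sign, as a product
`(X Y^{b_1})⋯(X Y^{b_{2m}})` of an even number of factors. -/
theorem sl2_standard_form (A : Matrix.SpecialLinearGroup (Fin 2) ℤ) :
    ∃ (m : ℕ), 1 ≤ m ∧ ∃ (b : Fin (2 * m) → ℤ) (e : Matrix.SpecialLinearGroup (Fin 2) ℤ),
      (e = 1 ∨ e = negI) ∧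
      e * A = (List.ofFn fun i => Xm * Ym ^ (b i)).prod := by
  obtain ⟨l, ⟨k, hk⟩, hl⟩ : A ∈ evenXYWords := evenXYWords_eq_top ▸ Submonoid.mem_top A
  set l' := [3, 3, 3, 3, 3, 3] ++ l
  have hlen : l'.length = 2 * (k + 3) := by simp [l', hk]; ring
  obtain ⟨b, hb⟩ : ∃ b : Fin (2 * (k + 3)) → ℤ, List.ofFn b = l' :=
    hlen ▸ ⟨_, List.ofFn_getElem⟩
  refine ⟨k + 3, by omega, b, 1, .inl rfl, ?_⟩
  have h_prefix : ([3, 3, 3, 3, 3, 3].map xyPow).prod = (xyPow 3 ^ 3) ^ 2 := by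
    simp [pow_succ, mul_assoc]
  rw [show (fun i => Xm * Ym ^ b i) = xyPow ∘ b from rfl, ← List.map_ofFn, hb, List.map_append,
    List.prod_append, h_prefix, xyPow_three_pow_three, one_pow, one_mul, one_mul, hl]
end

section
/- With D as defined (D(b_1,…,b_n) = det of the matrix with (i,j) entry S_{min(i,j)} + δ_{ij}, where S_k = b_n + ⋯ + b_{n-k+1}), for all n ≥ 2 and all b_1, …, b_n ≥ 0, the recursion D(b_1, …, b_n) = D(b_1, …, b_{n-2}, b_{n-1} + b_n) + b_n · D(b_1, …, b_{n-1}) holds. -/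
open Matrix Finset

def Dmat (n : ℕ) (b : Fin n → ℝ) : Matrix (Fin n) (Fin n) ℝ :=
  fun i j => (∑ t : Fin n, if n - 1 - min i.1 j.1 ≤ t.1 then b t else 0) +
    (if i = j then 1 else 0)

noncomputable def D (n : ℕ) (b : Fin n → ℝ) : ℝ := (Dmat n b).det

private lemma sum_split (n m : ℕ) (b : Fin (n+2) → ℝ) :
    (∑ t : Fin (n+2), if n - m ≤ t.1 then b t else 0)
      = (∑ t : Fin (n+1), if n - m ≤ t.1 then b t.castSucc else 0) + b (Fin.last (n+1)) := by
  rw [Fin.sum_univ_castSucc]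
  simp only [Fin.coe_castSucc, Fin.val_last]
  rw [if_pos (by omega)]

private lemma sum_last (n : ℕ) (b : Fin (n+2) → ℝ) :
    (∑ t : Fin (n+2), if n + 1 ≤ t.1 then b t else 0) = b (Fin.last (n+1)) := by
  rw [Fin.sum_univ_castSucc]
  simp only [Fin.coe_castSucc, Fin.val_last, if_pos le_rfl]
  rw [Finset.sum_eq_zero, zero_add]
  intro t _
  exact if_neg (by have := t.isLt; omega)

private lemma sumA (n m : ℕ) (b : Fin (n+2) → ℝ) :
    (∑ t : Fin (n+1), if n - m ≤ t.1 then
        (if t.1 = n then b t.castSucc + b (Fin.last (n+1)) else b t.castSucc) else 0)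
      = (∑ t : Fin (n+1), if n - m ≤ t.1 then b t.castSucc else 0) + b (Fin.last (n+1)) := by
  rw [Fin.sum_univ_castSucc, Fin.sum_univ_castSucc]
  simp only [Fin.coe_castSucc, Fin.val_last]
  rw [if_pos (Nat.sub_le n m), if_pos (Nat.sub_le n m)]
  simp only [if_pos trivial]
  rw [Finset.sum_congr rfl (fun (t : Fin n) _ => by
    have ht := t.isLt
    rw [if_neg (show ¬ t.1 = n by omega)])]
  ring

/-- The recursion `D(b_1,…,b_n) = D(b_1,…,b_{n-2}, b_{n-1}+b_n) + b_n · D(b_1,…,b_{n-1})`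
for `n ≥ 2` (here `n+2` variables `b 0, …, b (n+1)`). -/
theorem D_recursion (n : ℕ) (b : Fin (n + 2) → ℝ) (hb : ∀ i, 0 ≤ b i) :
    D (n + 2) b =
      D (n + 1) (fun i => if i.1 = n then b i.castSucc + b (Fin.last (n + 1)) else b i.castSucc)
        + b (Fin.last (n + 1)) * D (n + 1) (fun i => b i.castSucc) := by
  classical
  set M := Dmat (n + 2) b with hM
  -- the first column of M
  have hcol : ∀ i : Fin (n+2), M i 0 = b (Fin.last (n+1)) + (if i = (0 : Fin (n+2)) then 1 else 0) := by
    intro i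
    have h1 : n + 2 - 1 - min i.1 (0 : Fin (n+2)).1 = n + 1 := by
      simp only [Fin.val_zero]; omega
    simp only [hM, Dmat, h1, sum_last n b]
  -- split determinant by multilinearity in column 0
  have hsplit : M.det = (M.updateCol 0 (fun i => if i = 0 then (1:ℝ) else 0)).det
      + b (Fin.last (n+1)) * (M.updateCol 0 (fun _ => (1:ℝ))).det := by
    have heq : M = M.updateCol 0 ((fun i => if i = 0 then (1:ℝ) else 0)
        + b (Fin.last (n+1)) • (fun _ => (1:ℝ))) := by
      ext i j
      rcases eq_or_ne j 0 with rfl | hj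
      · rw [Matrix.updateCol_self, hcol i]
        simp only [Pi.add_apply, Pi.smul_apply, smul_eq_mul, mul_one]
        ring
      · rw [Matrix.updateCol_ne hj]
    conv_lhs => rw [heq]
    rw [Matrix.det_updateCol_add, Matrix.det_updateCol_smul]
  -- Piece A
  have hA : (M.updateCol 0 (fun i => if i = 0 then (1:ℝ) else 0)).det
      = D (n+1) (fun i => if i.1 = n then b i.castSucc + b (Fin.last (n+1)) else b i.castSucc) := by
    set A := M.updateCol 0 (fun i => if i = 0 then (1:ℝ) else 0) with hA'
    have hsub : A.submatrix (Fin.succAbove 0) Fin.succ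
        = Dmat (n+1) (fun i => if i.1 = n then b i.castSucc + b (Fin.last (n+1)) else b i.castSucc) := by
      ext i j
      have hj : (Fin.succ j) ≠ 0 := Fin.succ_ne_zero j
      have hm : n + 2 - 1 - min (Fin.succ i).1 (Fin.succ j).1 = n - min i.1 j.1 := by
        simp only [Fin.val_succ]; omega
      have hm2 : n + 1 - 1 - min i.1 j.1 = n - min i.1 j.1 := by omega
      simp only [Matrix.submatrix_apply, Fin.succAbove_zero, hA',
        Matrix.updateCol_ne hj, hM, Dmat, hm, hm2, Fin.succ_inj]
      rw [sum_split n (min i.1 j.1) b, sumA n (min i.1 j.1) b]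
    rw [hA', Matrix.det_succ_column_zero]
    rw [Fintype.sum_eq_single (0 : Fin (n+2)) (fun i hi => by
      rw [Matrix.updateCol_self, if_neg hi, mul_zero, zero_mul])]
    rw [Matrix.updateCol_self, if_pos rfl]
    rw [← hA', hsub]
    simp [D]
  -- Piece B
  have hB : (M.updateCol 0 (fun _ => (1:ℝ))).det = D (n+1) (fun i => b i.castSucc) := by
    set B := M.updateCol 0 (fun _ => (1:ℝ)) with hB'
    set C : Matrix (Fin (n+2)) (Fin (n+2)) ℝ :=
      (fun j k => if j = k then 1 else if j = 0 then -(b (Fin.last (n+1))) else 0) with hC'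
    have hCdet : C.det = 1 := by
      rw [Matrix.det_of_upperTriangular (by
        intro i j hij
        have h1 : i ≠ j := ne_of_gt hij
        have h2 : i ≠ 0 := by
          rintro rfl
          exact Fin.not_lt_zero j hij
        simp only [hC', if_neg h1, if_neg h2])]
      simp [hC']
    have hBcol : ∀ i, B i 0 = 1 := fun i => by rw [hB', Matrix.updateCol_self]
    have hBC : ∀ i k, (B * C) i k =
        if k = 0 then 1 else B i k - b (Fin.last (n+1)) := by
      intro i k
      rw [Matrix.mul_apply]
      rcases eq_or_ne k 0 with rfl | hk
      · rw [if_pos rfl]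
        rw [Finset.sum_congr rfl (fun (j : Fin (n+2)) _ => show B i j * C j 0
            = if j = 0 then B i j else 0 by
          rcases eq_or_ne j 0 with rfl | hj
          · simp [hC']
          · simp [hC', hj])]
        rw [Finset.sum_ite_eq' Finset.univ (0 : Fin (n+2)) (fun j => B i j)]
        simp [hBcol]
      · rw [if_neg hk]
        rw [Finset.sum_congr rfl (fun (j : Fin (n+2)) _ => show B i j * C j k
            = (if j = k then B i j else 0)
              + (if j = 0 then -(b (Fin.last (n+1))) * B i j else 0) by
          rcases eq_or_ne j k with rfl | hj1
          · simp [hC', hk, Ne.symm hk]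
          · rcases eq_or_ne j 0 with rfl | hj0
            · simp only [hC', if_neg hj1, eq_self_iff_true, if_true]
              ring
            · simp [hC', hj1, hj0])]
        rw [Finset.sum_add_distrib,
          Finset.sum_ite_eq' Finset.univ k (fun j => B i j),
          Finset.sum_ite_eq' Finset.univ (0 : Fin (n+2))
            (fun j => -(b (Fin.last (n+1))) * B i j)]
        simp [hBcol]
        ring
    have hdetBC : (B * C).det = B.det := by rw [Matrix.det_mul, hCdet, mul_one]
    have hrow : ∀ k, (B * C) 0 k = if k = 0 then 1 else 0 := by
      intro k
      rw [hBC]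
      rcases eq_or_ne k 0 with rfl | hk
      · simp
      · rw [if_neg hk, if_neg hk]
        have hB0k : B 0 k = b (Fin.last (n+1)) := by
          have h1 : n + 2 - 1 - min (0 : Fin (n+2)).1 k.1 = n + 1 := by
            simp only [Fin.val_zero]; omega
          rw [hB', Matrix.updateCol_ne hk, hM]
          simp only [Dmat, h1, sum_last n b, if_neg (Ne.symm hk), add_zero]
        rw [hB0k]; ring
    have hsub : (B * C).submatrix Fin.succ (Fin.succAbove 0)
        = Dmat (n+1) (fun i => b i.castSucc) := by
      ext i j
      have hj : (Fin.succ j) ≠ 0 := Fin.succ_ne_zero j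
      have hm : n + 2 - 1 - min (Fin.succ i).1 (Fin.succ j).1 = n - min i.1 j.1 := by
        simp only [Fin.val_succ]; omega
      have hm2 : n + 1 - 1 - min i.1 j.1 = n - min i.1 j.1 := by omega
      rw [Matrix.submatrix_apply, Fin.succAbove_zero, hBC, if_neg hj,
        hB', Matrix.updateCol_ne hj, hM]
      simp only [Dmat, hm, hm2, Fin.succ_inj]
      rw [sum_split n (min i.1 j.1) b]
      ring
    rw [← hdetBC, Matrix.det_succ_row_zero]
    rw [Fintype.sum_eq_single (0 : Fin (n+2)) (fun j hj => by
      rw [hrow, if_neg hj, mul_zero, zero_mul])]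
    rw [hrow, if_pos rfl, hsub]
    simp [D]
  show M.det = _
  rw [hsplit, hA, hB]
end

section
/- With D as defined above, for all n ≥ 2 and all real b_1, …, b_n ≥ 0, D(b_1, …, b_n) - D(b_2, …, b_n) ≥ 0; that is, D is monotone under prepending a nonnegative variable. -/
/-!
Write `u_t` for the indicator vector of the last `t + 1` coordinates, so that
`Dmat m b = 1 + ∑ t, b t • u_t u_tᵀ`. A determinant is affine in a diagonal entry, with slope the
complementary principal minor; for the last entry of `Dmat (n + 2) b` that minor is
`Dmat (n + 1)` of the remaining variables. So `D(b_1, …, b_n) - D(b_2, …, b_n)` is the determinant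
of `Dmat` with its last diagonal entry lowered by one, i.e. of `(1 - e eᵀ) + ∑ t, b t • u_t u_tᵀ`
with `e` the last unit vector, which is positive semidefinite.
-/

open Matrix Finset

theorem Matrix.det_eq_det_sub_single_add_mul_det_submatrix {R : Type*} [CommRing R] {k : ℕ}
    (A : Matrix (Fin (k + 1)) (Fin (k + 1)) R) (i : Fin (k + 1)) (c : R) :
    A.det = (A - single i i c).det + c * (A.submatrix i.succAbove i.succAbove).det := by
  have hsub : A - single i i c = A.updateRow i (A i - Pi.single i c) := by
    ext j l
    by_cases hj : j = i
    · subst hj; simp [single_apply, Pi.single_apply, eq_comm]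
    · simp [hj, Ne.symm hj]
  have hminor : (A.updateRow i (Pi.single i 1)).det = (A.submatrix i.succAbove i.succAbove).det := by
    rw [← adjugate_apply, adjugate_fin_succ_eq_det_submatrix, ← two_mul, pow_mul]
    simp
  conv_lhs => rw [← updateRow_eq_self A i, ← sub_add_cancel (A i) (Pi.single i c)]
  have hsingle : (Pi.single i c : Fin (k + 1) → R) = c • Pi.single i 1 := by
    rw [← Pi.single_smul', smul_eq_mul, mul_one]
  rw [det_updateRow_add, hsub, hsingle, det_updateRow_smul, hminor]

def tailIndicator (m : ℕ) (t : Fin m) : Fin m → ℝ := fun i => if m - 1 - i.1 ≤ t.1 then 1 else 0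

theorem Dmat_eq_one_add_sum (m : ℕ) (b : Fin m → ℝ) :
    Dmat m b = 1 + ∑ t, b t • vecMulVec (tailIndicator m t) (tailIndicator m t) := by
  ext i j
  rw [Dmat, Matrix.add_apply, one_apply, add_comm, Matrix.sum_apply]
  congr 1
  refine sum_congr rfl fun t _ => ?_
  simp only [Matrix.smul_apply, vecMulVec_apply, tailIndicator, smul_eq_mul]
  split_ifs <;> first | (exfalso; omega) | simp

theorem posSemidef_Dmat_sub_single {m : ℕ} {b : Fin m → ℝ} (hb : ∀ t, 0 ≤ b t) (i : Fin m) :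
    (Dmat m b - single i i 1).PosSemidef := by
  have hdiag : (1 : Matrix (Fin m) (Fin m) ℝ) - single i i 1 = diagonal (1 - Pi.single i 1) := by
    rw [← diagonal_one, ← diagonal_single, diagonal_sub]; rfl
  rw [Dmat_eq_one_add_sum, add_sub_right_comm, hdiag]
  refine .add (.diagonal fun j => ?_) (posSemidef_sum _ fun t _ => ?_)
  · by_cases hj : j = i <;> simp [hj]
  · simpa using (posSemidef_vecMulVec_self_star (tailIndicator m t)).smul (hb t)

theorem Dmat_submatrix_castSucc (m : ℕ) (b : Fin (m + 1) → ℝ) :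
    (Dmat (m + 1) b).submatrix Fin.castSucc Fin.castSucc = Dmat m (fun t => b t.succ) := by
  ext i j
  have hmin : min i.1 j.1 < m := lt_of_le_of_lt (min_le_left _ _) i.isLt
  simp only [Dmat, submatrix_apply, Fin.castSucc_inj, Fin.sum_univ_succ, Fin.val_castSucc,
    Fin.val_zero, Fin.val_succ, add_tsub_cancel_right, nonpos_iff_eq_zero,
    Nat.sub_eq_zero_iff_le, not_le.mpr hmin, if_false, zero_add]
  congr 1
  exact sum_congr rfl fun t _ => if_congr (by omega) rfl rfl

/-- For `n ≥ 2` and nonnegative `b_1,…,b_n`,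
`D(b_1,…,b_n) - D(b_2,…,b_n) ≥ 0` (here `n+2` variables). -/
theorem D_monotone_prepend (n : ℕ) (b : Fin (n + 2) → ℝ) (hb : ∀ i, 0 ≤ b i) :
    0 ≤ D (n + 2) b - D (n + 1) (fun i => b i.succ) := by
  rw [D, D, det_eq_det_sub_single_add_mul_det_submatrix _ (Fin.last (n + 1)) 1, Fin.succAbove_last,
    Dmat_submatrix_castSucc, one_mul, add_sub_cancel_right]
  exact (posSemidef_Dmat_sub_single hb _).det_nonneg
end

section
/- For m an odd positive integer, there exist no integers j, a, b with 0 ≤ j < m, a ≡ m (mod 2), b ≡ 1 (mod 2), satisfying ((2j - m)^2 - m)/(4m) + (-m^2 b^2 - 4abm - 4a^2)/(4m(m+4)) = (m - 5)/4. -/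
/-!
The numerator `-m²b² - 4abm - 4a²` is `-(mb + 2a)²`, so clearing denominators turns the grading
equation into `(m + 4)((2j - m)² - m) - (mb + 2a)² = m(m + 4)(m - 5)`. For `m` odd both
`(2j - m)² - m` and `m - 5` are even, while `mb + 2a` is odd when `b` is: the two sides have
different parity.
-/

theorem grading_equation_iff {K : Type*} [Field K] [CharZero K] {m j a b : K} (hm : m ≠ 0)
    (hm4 : m + 4 ≠ 0) :
    ((2 * j - m) ^ 2 - m) / (4 * m) +
        (-m ^ 2 * b ^ 2 - 4 * a * b * m - 4 * a ^ 2) / (4 * m * (m + 4)) = (m - 5) / 4 ↔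
      (m + 4) * ((2 * j - m) ^ 2 - m) - (m * b + 2 * a) ^ 2 = m * (m + 4) * (m - 5) := by
  field_simp
  constructor <;> intro h <;> linear_combination h

theorem cleared_grading_equation_ne_of_odd {m j a b : ℤ} (hm : Odd m) (hb : Odd b) :
    (m + 4) * ((2 * j - m) ^ 2 - m) - (m * b + 2 * a) ^ 2 ≠ m * (m + 4) * (m - 5) := by
  intro h
  have hleft : Even ((m + 4) * ((2 * j - m) ^ 2 - m)) :=
    (((even_two_mul j).sub_odd hm).pow.sub_odd hm).mul_left _
  have hright : Even (m * (m + 4) * (m - 5)) := (hm.sub_odd (by decide)).mul_left _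
  have hsq : Even ((m * b + 2 * a) ^ 2) := by
    simpa only [← h, sub_sub_cancel] using hleft.sub hright
  exact Int.not_even_iff_odd.mpr ((hm.mul hb).add_even (even_two_mul a)).pow hsq

theorem grading_obstruction_general (m : ℤ) (hodd : Odd m) :
    ¬ ∃ j a b : ℤ, 0 ≤ j ∧ j < m ∧ a ≡ m [ZMOD 2] ∧ b ≡ 1 [ZMOD 2] ∧
      (((2 * j - m) ^ 2 - m : ℚ)) / (4 * m) +
        ((-(m : ℚ) ^ 2 * b ^ 2 - 4 * a * b * m - 4 * a ^ 2)) / (4 * m * (m + 4)) =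
        ((m : ℚ) - 5) / 4 := by
  rintro ⟨j, a, b, -, -, -, hb, heq⟩
  have hm2 : m % 2 = 1 := Int.odd_iff.mp hodd
  have hm : (m : ℚ) ≠ 0 := by exact_mod_cast (by omega : m ≠ 0)
  have hm4 : (m : ℚ) + 4 ≠ 0 := by exact_mod_cast (by omega : m + 4 ≠ 0)
  rw [grading_equation_iff hm hm4] at heq
  exact cleared_grading_equation_ne_of_odd hodd (Int.odd_iff.mpr hb) (by exact_mod_cast heq)

/-- For `m` an odd positive integer there are no integers `j, a, b` with
`0 ≤ j < m`, `a ≡ m (mod 2)`, `b ≡ 1 (mod 2)` satisfying the grading equation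
`((2j-m)² - m)/(4m) + (-m²b² - 4abm - 4a²)/(4m(m+4)) = (m-5)/4`. -/
theorem grading_obstruction (m : ℤ) (hpos : 0 < m) (hodd : Odd m) :
    ¬ ∃ j a b : ℤ, 0 ≤ j ∧ j < m ∧ a ≡ m [ZMOD 2] ∧ b ≡ 1 [ZMOD 2] ∧
      (((2 * j - m) ^ 2 - m : ℚ)) / (4 * m) +
        ((-(m : ℚ) ^ 2 * b ^ 2 - 4 * a * b * m - 4 * a ^ 2)) / (4 * m * (m + 4)) =
        ((m : ℚ) - 5) / 4 :=
  grading_obstruction_general m hodd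
end

section
/- In SL(2,ℤ), the trace of a product X^{a_1} Y^{-b_1} ⋯ X^{a_n} Y^{-b_n} with all a_i, b_i ≥ 1 (X = [[1,1],[0,1]], Y = [[1,0],[-1,1]]) satisfies trace ≥ 2 + Σ a_i b_i; in particular every entry of the product matrix is positive. -/
open Matrix

def X : Matrix (Fin 2) (Fin 2) ℤ := !![1, 1; 0, 1]

def Y : Matrix (Fin 2) (Fin 2) ℤ := !![1, 0; -1, 1]

lemma Yinv : Y⁻¹ = !![1, 0; 1, 1] := by
  apply Matrix.inv_eq_right_inv
  rw [Y, Matrix.mul_fin_two, Matrix.one_fin_two]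
  norm_num

lemma Xpow (k : ℕ) : X ^ k = !![1, (k : ℤ); 0, 1] := by
  induction k with
  | zero => simp [Matrix.one_fin_two]
  | succ k ih =>
    rw [pow_succ, ih, X, Matrix.mul_fin_two]
    push_cast; ring_nf

lemma Yinvpow (k : ℕ) : (Y⁻¹) ^ k = !![1, 0; (k : ℤ), 1] := by
  induction k with
  | zero => simp [Matrix.one_fin_two]
  | succ k ih =>
    rw [pow_succ, ih, Yinv, Matrix.mul_fin_two]
    push_cast; ring_nf

lemma factor (k l : ℕ) : X ^ k * (Y⁻¹) ^ l = !![1 + (k:ℤ)*l, (k:ℤ); (l:ℤ), 1] := by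
  rw [Xpow, Yinvpow, Matrix.mul_fin_two]
  ring_nf

lemma key (n : ℕ) (a b : Fin n → ℕ) (ha : ∀ i, 1 ≤ a i) (hb : ∀ i, 1 ≤ b i) :
    ∀ P, P = (List.ofFn fun i => X ^ (a i) * (Y⁻¹) ^ (b i)).prod →
    1 + (∑ i, (a i : ℤ) * (b i : ℤ)) ≤ P 0 0 ∧ 1 ≤ P 1 1 ∧ 0 ≤ P 0 1 ∧ 0 ≤ P 1 0 ∧
      (1 ≤ n → 1 ≤ P 0 1 ∧ 1 ≤ P 1 0) := by
  induction n with
  | zero =>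
    intro P hP
    simp only [List.ofFn_zero, List.prod_nil] at hP
    subst hP
    simp [Matrix.one_apply]
  | succ n ih =>
    intro P hP
    rw [List.ofFn_succ, List.prod_cons] at hP
    obtain ⟨h1, h2, h3, h4, _⟩ :=
      ih (fun i => a i.succ) (fun i => b i.succ) (fun i => ha _) (fun i => hb _) _ rfl
    set Q := (List.ofFn fun i => X ^ (a i.succ) * (Y⁻¹) ^ (b i.succ)).prod with hQ
    rw [factor] at hP
    have e : ∀ i j, P i j = !![1 + (a 0:ℤ)*(b 0), (a 0:ℤ); (b 0:ℤ), 1] i 0 * Q 0 j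
        + !![1 + (a 0:ℤ)*(b 0), (a 0:ℤ); (b 0:ℤ), 1] i 1 * Q 1 j := by
      intro i j
      rw [hP, Matrix.mul_apply, Fin.sum_univ_two]
    have ha0 : (1:ℤ) ≤ (a 0 : ℤ) := by exact_mod_cast ha 0
    have hb0 : (1:ℤ) ≤ (b 0 : ℤ) := by exact_mod_cast hb 0
    have hsum : ∑ i, (a i : ℤ) * (b i : ℤ)
        = (a 0 : ℤ) * (b 0 : ℤ) + ∑ i : Fin n, (a i.succ : ℤ) * (b i.succ : ℤ) :=
      Fin.sum_univ_succ _
    have hS : 0 ≤ ∑ i : Fin n, (a i.succ : ℤ) * (b i.succ : ℤ) :=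
      Finset.sum_nonneg fun i _ => by positivity
    refine ⟨?_, ?_, ?_, ?_, fun _ => ⟨?_, ?_⟩⟩
    · rw [e 0 0, hsum]; simp only [Matrix.of_apply, Matrix.cons_val_zero, Matrix.cons_val_one,
        Matrix.head_cons]
      nlinarith [mul_le_mul_of_nonneg_left h1 (show (0:ℤ) ≤ (a 0:ℤ)*(b 0:ℤ) by positivity),
        mul_le_mul_of_nonneg_left h1 (show (0:ℤ) ≤ (b 0:ℤ) by linarith),
        mul_le_mul_of_nonneg_left h2 (show (0:ℤ) ≤ (a 0:ℤ) by linarith),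
        mul_nonneg (show (0:ℤ) ≤ (a 0:ℤ) by linarith) h4,
        mul_nonneg (show (0:ℤ) ≤ (b 0:ℤ) by linarith) h3,
        mul_nonneg (show (0:ℤ) ≤ 1+(a 0:ℤ)*(b 0:ℤ) by positivity) h3,
        mul_nonneg (mul_nonneg (show (0:ℤ) ≤ (a 0:ℤ) by linarith)
          (show (0:ℤ) ≤ (b 0:ℤ) by linarith)) hS,
        mul_nonneg (show (0:ℤ) ≤ (b 0:ℤ) by linarith) hS]
    · rw [e 1 1]; simp only [Matrix.of_apply, Matrix.cons_val_zero, Matrix.cons_val_one,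
        Matrix.head_cons]
      nlinarith [mul_le_mul_of_nonneg_left h1 (show (0:ℤ) ≤ (a 0:ℤ)*(b 0:ℤ) by positivity),
        mul_le_mul_of_nonneg_left h1 (show (0:ℤ) ≤ (b 0:ℤ) by linarith),
        mul_le_mul_of_nonneg_left h2 (show (0:ℤ) ≤ (a 0:ℤ) by linarith),
        mul_nonneg (show (0:ℤ) ≤ (a 0:ℤ) by linarith) h4,
        mul_nonneg (show (0:ℤ) ≤ (b 0:ℤ) by linarith) h3,
        mul_nonneg (show (0:ℤ) ≤ 1+(a 0:ℤ)*(b 0:ℤ) by positivity) h3,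
        mul_nonneg (mul_nonneg (show (0:ℤ) ≤ (a 0:ℤ) by linarith)
          (show (0:ℤ) ≤ (b 0:ℤ) by linarith)) hS,
        mul_nonneg (show (0:ℤ) ≤ (b 0:ℤ) by linarith) hS]
    · rw [e 0 1]; simp only [Matrix.of_apply, Matrix.cons_val_zero, Matrix.cons_val_one,
        Matrix.head_cons]
      nlinarith [mul_le_mul_of_nonneg_left h1 (show (0:ℤ) ≤ (a 0:ℤ)*(b 0:ℤ) by positivity),
        mul_le_mul_of_nonneg_left h1 (show (0:ℤ) ≤ (b 0:ℤ) by linarith),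
        mul_le_mul_of_nonneg_left h2 (show (0:ℤ) ≤ (a 0:ℤ) by linarith),
        mul_nonneg (show (0:ℤ) ≤ (a 0:ℤ) by linarith) h4,
        mul_nonneg (show (0:ℤ) ≤ (b 0:ℤ) by linarith) h3,
        mul_nonneg (show (0:ℤ) ≤ 1+(a 0:ℤ)*(b 0:ℤ) by positivity) h3,
        mul_nonneg (mul_nonneg (show (0:ℤ) ≤ (a 0:ℤ) by linarith)
          (show (0:ℤ) ≤ (b 0:ℤ) by linarith)) hS,
        mul_nonneg (show (0:ℤ) ≤ (b 0:ℤ) by linarith) hS]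
    · rw [e 1 0]; simp only [Matrix.of_apply, Matrix.cons_val_zero, Matrix.cons_val_one,
        Matrix.head_cons]
      nlinarith [mul_le_mul_of_nonneg_left h1 (show (0:ℤ) ≤ (a 0:ℤ)*(b 0:ℤ) by positivity),
        mul_le_mul_of_nonneg_left h1 (show (0:ℤ) ≤ (b 0:ℤ) by linarith),
        mul_le_mul_of_nonneg_left h2 (show (0:ℤ) ≤ (a 0:ℤ) by linarith),
        mul_nonneg (show (0:ℤ) ≤ (a 0:ℤ) by linarith) h4,
        mul_nonneg (show (0:ℤ) ≤ (b 0:ℤ) by linarith) h3,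
        mul_nonneg (show (0:ℤ) ≤ 1+(a 0:ℤ)*(b 0:ℤ) by positivity) h3,
        mul_nonneg (mul_nonneg (show (0:ℤ) ≤ (a 0:ℤ) by linarith)
          (show (0:ℤ) ≤ (b 0:ℤ) by linarith)) hS,
        mul_nonneg (show (0:ℤ) ≤ (b 0:ℤ) by linarith) hS]
    · rw [e 0 1]; simp only [Matrix.of_apply, Matrix.cons_val_zero, Matrix.cons_val_one,
        Matrix.head_cons]
      nlinarith [mul_le_mul_of_nonneg_left h1 (show (0:ℤ) ≤ (a 0:ℤ)*(b 0:ℤ) by positivity),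
        mul_le_mul_of_nonneg_left h1 (show (0:ℤ) ≤ (b 0:ℤ) by linarith),
        mul_le_mul_of_nonneg_left h2 (show (0:ℤ) ≤ (a 0:ℤ) by linarith),
        mul_nonneg (show (0:ℤ) ≤ (a 0:ℤ) by linarith) h4,
        mul_nonneg (show (0:ℤ) ≤ (b 0:ℤ) by linarith) h3,
        mul_nonneg (show (0:ℤ) ≤ 1+(a 0:ℤ)*(b 0:ℤ) by positivity) h3,
        mul_nonneg (mul_nonneg (show (0:ℤ) ≤ (a 0:ℤ) by linarith)
          (show (0:ℤ) ≤ (b 0:ℤ) by linarith)) hS,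
        mul_nonneg (show (0:ℤ) ≤ (b 0:ℤ) by linarith) hS]
    · rw [e 1 0]; simp only [Matrix.of_apply, Matrix.cons_val_zero, Matrix.cons_val_one,
        Matrix.head_cons]
      nlinarith [mul_le_mul_of_nonneg_left h1 (show (0:ℤ) ≤ (a 0:ℤ)*(b 0:ℤ) by positivity),
        mul_le_mul_of_nonneg_left h1 (show (0:ℤ) ≤ (b 0:ℤ) by linarith),
        mul_le_mul_of_nonneg_left h2 (show (0:ℤ) ≤ (a 0:ℤ) by linarith),
        mul_nonneg (show (0:ℤ) ≤ (a 0:ℤ) by linarith) h4,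
        mul_nonneg (show (0:ℤ) ≤ (b 0:ℤ) by linarith) h3,
        mul_nonneg (show (0:ℤ) ≤ 1+(a 0:ℤ)*(b 0:ℤ) by positivity) h3,
        mul_nonneg (mul_nonneg (show (0:ℤ) ≤ (a 0:ℤ) by linarith)
          (show (0:ℤ) ≤ (b 0:ℤ) by linarith)) hS,
        mul_nonneg (show (0:ℤ) ≤ (b 0:ℤ) by linarith) hS]

/-- For `P = X^{a_1} Y^{-b_1} ⋯ X^{a_n} Y^{-b_n}` with all `a_i, b_i ≥ 1`,
`trace P ≥ 2 + Σ a_i b_i`, and every entry of `P` is positive. -/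
theorem trace_lower_bound (n : ℕ) (hn : 1 ≤ n) (a b : Fin n → ℕ)
    (ha : ∀ i, 1 ≤ a i) (hb : ∀ i, 1 ≤ b i)
    (P : Matrix (Fin 2) (Fin 2) ℤ)
    (hP : P = (List.ofFn fun i => X ^ (a i) * (Y⁻¹) ^ (b i)).prod) :
    2 + (∑ i, (a i : ℤ) * (b i : ℤ)) ≤ Matrix.trace P ∧ ∀ i j, 0 < P i j := by
  obtain ⟨h1, h2, h3, h4, h5⟩ := key n a b ha hb P hP
  obtain ⟨h6, h7⟩ := h5 hn
  have hS : 0 ≤ ∑ i, (a i : ℤ) * (b i : ℤ) :=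
    Finset.sum_nonneg fun i _ => by positivity
  constructor
  · rw [Matrix.trace_fin_two]; linarith
  · intro i j
    fin_cases i <;> fin_cases j <;> simp_all <;> linarith
end
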